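/- arXiv:math/0412262 — 4 statements merged into one kernel-verified Lean document; each statement's English description precedes it below -/
import Mathlib

section
/- If p is a prime with p ≡ 2 (mod 5) and q = 4p + 1 is also prime, then 10 is a primitive root modulo q, i.e., the multiplicative order of 10 modulo q equals q - 1. -/
/-!
Since `q = 4p + 1 ≡ 5 (mod 8)`, 2 is a nonresidue mod `q`, and since `q ≡ 4 (mod 5)`, quadratic
reciprocity makes 5 a residue; so 10 is a nonresidue and Euler's criterion gives `10 ^ (2p) = -1`.
The order of 10 divides `4p` but not `2p`, hence is `4` or `4p`; order `4` would mean
`10 ^ 2 = -1`, i.e. `q ∣ 101`, which is impossible as `101 ≢ 4 (mod 5)`.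
-/

lemma legendreSym_two_eq_neg_one {q : ℕ} [Fact q.Prime] (hq : q % 8 = 3 ∨ q % 8 = 5) :
    legendreSym q 2 = -1 := by
  rw [legendreSym.at_two (by omega), ZMod.χ₈_nat_eq_if_mod_eight]
  omega

lemma legendreSym_five_eq_one {q : ℕ} [Fact q.Prime] (hq : q % 5 = 1 ∨ q % 5 = 4) :
    legendreSym q 5 = 1 := by
  have h2 : ((2 : ℤ) : ZMod 5) ≠ 0 := by decide
  have : Fact (Nat.Prime 5) := ⟨by norm_num⟩
  have hrec := legendreSym.quadratic_reciprocity_one_mod_four (p := 5) (q := q) rfl (by omega)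
  rw [legendreSym.mod 5 q] at hrec
  push_cast at hrec
  rw [hrec]
  rcases hq with h | h
  · rw [show (q : ℤ) % 5 = 1 by omega, legendreSym.at_one]
  · rw [show (q : ℤ) % 5 = 2 ^ 2 by omega]
    exact legendreSym.sq_one' 5 h2

lemma legendreSym_ten_eq_neg_one {q : ℕ} [Fact q.Prime] (h8 : q % 8 = 3 ∨ q % 8 = 5)
    (h5 : q % 5 = 1 ∨ q % 5 = 4) : legendreSym q 10 = -1 := by
  rw [show (10 : ℤ) = 2 * 5 by norm_num, legendreSym.mul, legendreSym_two_eq_neg_one h8,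
    legendreSym_five_eq_one h5, neg_one_mul]

lemma orderOf_eq_four_mul_of_pow_two_mul_eq_neg_one {R : Type*} [Ring R] {x : R} {p : ℕ}
    (hp : p.Prime) (hp2 : p ≠ 2) (hneg : (-1 : R) ≠ 1) (hx : x ^ (2 * p) = -1)
    (hx2 : x ^ 2 ≠ -1) :
    orderOf x = 4 * p := by
  apply orderOf_eq_of_pow_and_pow_div_prime (by linarith [hp.pos])
  · rw [show 4 * p = 2 * p * 2 by ring, pow_mul, hx, neg_one_sq]
  intro r hr hrp
  rcases (Nat.Prime.dvd_mul hr).mp hrp with h4 | hrp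
  · obtain rfl : r = 2 := (Nat.prime_dvd_prime_iff_eq hr Nat.prime_two).mp
      (hr.dvd_of_dvd_pow (n := 2) h4)
    rwa [show 4 * p / 2 = 2 * p by omega, hx]
  · obtain rfl : r = p := (Nat.prime_dvd_prime_iff_eq hr hp).mp hrp
    rw [Nat.mul_div_cancel _ hp.pos]
    intro h4
    obtain ⟨k, rfl⟩ := hp.odd_of_ne_two hp2
    apply hx2
    rw [← hx, show 2 * (2 * k + 1) = 4 * k + 2 by ring, pow_add, pow_mul, h4, one_pow, one_mul]

theorem stmt_1 (p : ℕ) (hp : p.Prime) (hp5 : p % 5 = 2)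
    (hq : (4 * p + 1).Prime) :
    orderOf (10 : ZMod (4 * p + 1)) = (4 * p + 1) - 1 := by
  have : Fact (4 * p + 1).Prime := ⟨hq⟩
  have hp2 : p ≠ 2 := by rintro rfl; norm_num at hq
  have hp_odd : p % 2 = 1 := hp.eq_two_or_odd.resolve_left hp2
  have : Fact (2 < 4 * p + 1) := ⟨by omega⟩
  have hx : (10 : ZMod (4 * p + 1)) ^ (2 * p) = -1 := by
    have euler := legendreSym.eq_pow (4 * p + 1) 10
    rw [legendreSym_ten_eq_neg_one (by omega) (by omega), show (4 * p + 1) / 2 = 2 * p by omega]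
      at euler
    exact_mod_cast euler.symm
  have hx2 : (10 : ZMod (4 * p + 1)) ^ 2 ≠ -1 := by
    intro h
    have h101 : ((101 : ℕ) : ZMod (4 * p + 1)) = 0 := by push_cast; linear_combination h
    have hq101 : 4 * p + 1 = 101 :=
      (Nat.prime_dvd_prime_iff_eq hq (by norm_num)).mp ((ZMod.natCast_eq_zero_iff _ _).mp h101)
    omega
  rw [orderOf_eq_four_mul_of_pow_two_mul_eq_neg_one hp hp2 ZMod.neg_one_ne_one hx hx2]
  omega
end

section
/- For every positive integer n and every real number t > 1, the sum ∑_{d | n} μ(d) t^{n/d} is strictly positive. -/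
open ArithmeticFunction Finset

lemma real_exp_tsum (x : ℝ) : Real.exp x = ∑' j : ℕ, x ^ j / (Nat.factorial j : ℝ) := by
  rw [Real.exp_eq_exp_ℝ, NormedSpace.exp_eq_tsum_div]

lemma jordan_prime_pow {p : ℕ} (hp : p.Prime) (k j : ℕ) (hk : k ≠ 0) :
    ∑ d ∈ (p ^ k).divisors, (ArithmeticFunction.moebius d : ℤ) * ((p ^ k / d : ℕ) : ℤ) ^ j
      = (p : ℤ) ^ (k * j) - (p : ℤ) ^ ((k - 1) * j) := by
  rw [Nat.sum_divisors_prime_pow hp]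
  have h2 : (2 : ℕ) ≤ k + 1 := by omega
  rw [← Finset.sum_range_add_sum_Ico _ h2]
  have hz : ∀ i ∈ Finset.Ico 2 (k + 1),
      (ArithmeticFunction.moebius (p ^ i) : ℤ) * ((p ^ k / p ^ i : ℕ) : ℤ) ^ j = 0 := by
    intro i hi
    simp only [Finset.mem_Ico] at hi
    rw [ArithmeticFunction.moebius_apply_prime_pow hp (by omega), if_neg (by omega)]
    ring
  have hdiv : p ^ k / p ^ 1 = p ^ (k - 1) := by
    rw [Nat.pow_div (by omega) hp.pos]
  rw [Finset.sum_eq_zero hz, add_zero, Finset.sum_range_succ, Finset.sum_range_one,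
    pow_zero, ArithmeticFunction.moebius_apply_one,
    ArithmeticFunction.moebius_apply_prime_pow hp one_ne_zero, if_pos rfl, hdiv, Nat.div_one]
  push_cast [← pow_mul]
  ring

lemma jordan_eq (j m : ℕ) :
    (ArithmeticFunction.moebius * ((ArithmeticFunction.pow j : ArithmeticFunction ℕ) :
      ArithmeticFunction ℤ)) m
      = ∑ d ∈ m.divisors, (ArithmeticFunction.moebius d : ℤ) * ((m / d : ℕ) : ℤ) ^ j := by
  rw [ArithmeticFunction.mul_apply, Nat.sum_divisorsAntidiagonal
    (f := fun x y => (ArithmeticFunction.moebius x : ℤ) * ((ArithmeticFunction.pow j :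
      ArithmeticFunction ℕ) : ArithmeticFunction ℤ) y)]
  refine Finset.sum_congr rfl fun d hd => ?_
  obtain ⟨hdvd, hm⟩ := Nat.mem_divisors.mp hd
  have hd0 : d ≠ 0 := by rintro rfl; exact hm (Nat.eq_zero_of_zero_dvd hdvd)
  have hq : m / d ≠ 0 := (Nat.div_pos (Nat.le_of_dvd (Nat.pos_of_ne_zero hm) hdvd)
    (Nat.pos_of_ne_zero hd0)).ne'
  rw [ArithmeticFunction.natCoe_apply, ArithmeticFunction.pow_apply,
    if_neg (by tauto)]
  push_cast
  ring

lemma jordan_factored (j : ℕ) {n : ℕ} (hn : n ≠ 0) :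
    ∑ d ∈ n.divisors, (ArithmeticFunction.moebius d : ℤ) * ((n / d : ℕ) : ℤ) ^ j
      = ∏ p ∈ n.factorization.support,
          ((p : ℤ) ^ (n.factorization p * j) - (p : ℤ) ^ ((n.factorization p - 1) * j)) := by
  have hmul : (ArithmeticFunction.moebius * ((ArithmeticFunction.pow j : ArithmeticFunction ℕ) :
      ArithmeticFunction ℤ)).IsMultiplicative :=
    ArithmeticFunction.isMultiplicative_moebius.mul
      (ArithmeticFunction.isMultiplicative_pow.natCast)
  rw [← jordan_eq, hmul.multiplicative_factorization _ hn, Finsupp.prod]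
  refine Finset.prod_congr rfl fun p hp => ?_
  have hpp : p.Prime := Nat.prime_of_mem_primeFactors (by rwa [Nat.support_factorization] at hp)
  have hk : n.factorization p ≠ 0 := Finsupp.mem_support_iff.mp hp
  rw [jordan_eq, jordan_prime_pow hpp _ _ hk]

lemma jordan_nonneg (j : ℕ) {n : ℕ} (hn : n ≠ 0) :
    0 ≤ ∑ d ∈ n.divisors, (ArithmeticFunction.moebius d : ℤ) * ((n / d : ℕ) : ℤ) ^ j := by
  rw [jordan_factored j hn]
  refine Finset.prod_nonneg fun p hp => ?_
  have hpp : p.Prime := Nat.prime_of_mem_primeFactors (by rwa [Nat.support_factorization] at hp)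
  have h1 : (1 : ℤ) ≤ (p : ℤ) := by exact_mod_cast hpp.one_lt.le
  refine sub_nonneg.mpr (pow_le_pow_right₀ h1 ?_)
  exact Nat.mul_le_mul_right _ (Nat.sub_le _ _)

lemma jordan_pos {j n : ℕ} (hj : j ≠ 0) (hn : n ≠ 0) :
    0 < ∑ d ∈ n.divisors, (ArithmeticFunction.moebius d : ℤ) * ((n / d : ℕ) : ℤ) ^ j := by
  rw [jordan_factored j hn]
  refine Finset.prod_pos fun p hp => ?_
  have hpp : p.Prime := Nat.prime_of_mem_primeFactors (by rwa [Nat.support_factorization] at hp)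
  have hk : n.factorization p ≠ 0 := Finsupp.mem_support_iff.mp hp
  have h1 : (1 : ℤ) < (p : ℤ) := by exact_mod_cast hpp.one_lt
  refine sub_pos.mpr (pow_lt_pow_right₀ h1 ?_)
  exact (Nat.mul_lt_mul_right (Nat.pos_of_ne_zero hj)).mpr (by omega)

theorem stmt_5 (n : ℕ) (hn : 0 < n) (t : ℝ) (ht : 1 < t) :
    0 < ∑ d ∈ n.divisors, (ArithmeticFunction.moebius d : ℝ) * t ^ (n / d) := by
  have ht0 : 0 < t := lt_trans one_pos ht
  set L := Real.log t with hLdef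
  have hL0 : 0 < L := Real.log_pos ht
  have hsummand : ∀ d : ℕ, Summable (fun j : ℕ =>
      (ArithmeticFunction.moebius d : ℝ) * (((n / d : ℕ) : ℝ) * L) ^ j / (Nat.factorial j : ℝ)) := by
    intro d
    simpa [mul_div_assoc] using
      (Real.summable_pow_div_factorial (((n / d : ℕ) : ℝ) * L)).mul_left
        (ArithmeticFunction.moebius d : ℝ)
  have hrw : ∑ d ∈ n.divisors, (ArithmeticFunction.moebius d : ℝ) * t ^ (n / d)
      = ∑' j : ℕ, ∑ d ∈ n.divisors,
          (ArithmeticFunction.moebius d : ℝ) * (((n / d : ℕ) : ℝ) * L) ^ j /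
            (Nat.factorial j : ℝ) := by
    rw [Summable.tsum_finsetSum fun d _ => hsummand d]
    refine Finset.sum_congr rfl fun d hd => ?_
    have : t ^ (n / d) = ∑' j : ℕ, (((n / d : ℕ) : ℝ) * L) ^ j / (Nat.factorial j : ℝ) := by
      rw [← Real.exp_log ht0, ← Real.exp_nat_mul, real_exp_tsum]
    rw [this, ← tsum_mul_left]
    simp [mul_div_assoc]
  rw [hrw]
  have hterm : ∀ j : ℕ, ∑ d ∈ n.divisors,
      (ArithmeticFunction.moebius d : ℝ) * (((n / d : ℕ) : ℝ) * L) ^ j / (Nat.factorial j : ℝ)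
      = (L ^ j / (Nat.factorial j : ℝ)) *
        ((∑ d ∈ n.divisors, (ArithmeticFunction.moebius d : ℤ) * ((n / d : ℕ) : ℤ) ^ j : ℤ) : ℝ) := by
    intro j
    rw [Int.cast_sum, Finset.mul_sum]
    refine Finset.sum_congr rfl fun d hd => ?_
    rw [Int.cast_mul, Int.cast_pow, Int.cast_natCast, mul_pow]
    ring
  refine Summable.tsum_pos (summable_sum fun d _ => hsummand d) (fun j => ?_) 1 ?_
  · rw [hterm]
    refine mul_nonneg (by positivity) ?_
    exact_mod_cast jordan_nonneg j hn.ne'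
  · rw [hterm]
    refine mul_pos (by positivity) ?_
    exact_mod_cast jordan_pos one_ne_zero hn.ne'
end

section
/- Let G be a finite cyclic group of order n and let g ∈ G. Then (φ(n)/n) · ∑_{d | n} (μ(d)/φ(d)) · ∑_{χ of order d} χ(g) equals 1 if g generates G and 0 otherwise, where the inner sum is over characters χ of G of exact order d. -/
open scoped Classical
open Finset

lemma aux_sum_nthRootsFinset (k : ℕ) (hk : 0 < k) :
    ∑ ζ ∈ Polynomial.nthRootsFinset k (1 : ℂ), ζ = if k = 1 then 1 else 0 := by
  have : NeZero k := ⟨hk.ne'⟩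
  obtain ⟨ζ, hζ⟩ : ∃ ζ : ℂ, IsPrimitiveRoot ζ k := ⟨_, Complex.isPrimitiveRoot_exp k hk.ne'⟩
  have hinj : ∀ i ∈ Finset.range k, ∀ j ∈ Finset.range k, ζ ^ i = ζ ^ j → i = j := by
    intro i hi j hj h
    exact hζ.pow_inj (Finset.mem_range.1 hi) (Finset.mem_range.1 hj) h
  have himg : (Finset.range k).image (ζ ^ ·) = Polynomial.nthRootsFinset k (1 : ℂ) := by
    apply Finset.eq_of_subset_of_card_le
    · intro x hx
      obtain ⟨i, _, rfl⟩ := Finset.mem_image.1 hx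
      rw [Polynomial.mem_nthRootsFinset hk, ← pow_mul, mul_comm, pow_mul, hζ.pow_eq_one, one_pow]
    · rw [hζ.card_nthRootsFinset, Finset.card_image_of_injOn (fun i hi j hj h => hinj i hi j hj h)]
      simp
  rw [← himg, Finset.sum_image hinj]
  rcases eq_or_lt_of_le (Nat.succ_le_of_lt hk) with h1 | h1
  · rw [if_pos h1.symm, ← h1]
    simp
  · rw [if_neg (by omega)]
    simpa using hζ.geom_sum_eq_zero h1

lemma aux_sum_primitiveRoots (k : ℕ) (hk : 0 < k) :
    ∑ ζ ∈ primitiveRoots k ℂ, ζ = (ArithmeticFunction.moebius k : ℂ) := by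
  have key : ∀ m : ℕ, 0 < m → ∑ i ∈ m.divisors, (∑ ζ ∈ primitiveRoots i ℂ, ζ) =
      (fun m : ℕ => if m = 1 then (1:ℂ) else 0) m := by
    intro m hm
    have : NeZero m := ⟨hm.ne'⟩
    obtain ⟨ζ, hζ⟩ : ∃ ζ : ℂ, IsPrimitiveRoot ζ m := ⟨_, Complex.isPrimitiveRoot_exp m hm.ne'⟩
    rw [← Finset.sum_biUnion (fun i _ j _ hij => IsPrimitiveRoot.disjoint hij),
      ← IsPrimitiveRoot.nthRoots_one_eq_biUnion_primitiveRoots]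
    exact aux_sum_nthRootsFinset m hm
  have h := ArithmeticFunction.sum_eq_iff_sum_smul_moebius_eq.mp key k hk
  rw [← h, Finset.sum_eq_single (k, 1)]
  · simp
  · rintro ⟨a, b⟩ hab hne
    rw [Nat.mem_divisorsAntidiagonal] at hab
    have hb : b ≠ 1 := by
      rintro rfl
      exact hne (by rw [← hab.1, mul_one])
    simp [hb]
  · intro h'
    exact absurd (Nat.mem_divisorsAntidiagonal.mpr ⟨mul_one k, hk.ne'⟩) h'

lemma aux_sum_units_pow {d : ℕ} [NeZero d] {ω : ℂ} (hω : IsPrimitiveRoot ω d) :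
    ∑ b : (ZMod d)ˣ, ω ^ (b : ZMod d).val = (ArithmeticFunction.moebius d : ℂ) := by
  have hd : 0 < d := NeZero.pos d
  rw [← aux_sum_primitiveRoots d hd]
  have hinj : ∀ a ∈ (Finset.univ : Finset (ZMod d)ˣ), ∀ b ∈ (Finset.univ : Finset (ZMod d)ˣ),
      ω ^ ((a : ZMod d)).val = ω ^ ((b : ZMod d)).val → a = b := by
    intro a _ b _ h
    have h2 := hω.pow_inj (ZMod.val_lt _) (ZMod.val_lt _) h
    exact Units.ext (ZMod.val_injective d h2)
  have himg : (Finset.univ : Finset (ZMod d)ˣ).image (fun b : (ZMod d)ˣ => ω ^ (b : ZMod d).val)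
      = primitiveRoots d ℂ := by
    apply Finset.eq_of_subset_of_card_le
    · intro x hx
      obtain ⟨b, _, rfl⟩ := Finset.mem_image.1 hx
      rw [mem_primitiveRoots hd]
      exact hω.pow_of_coprime _ (ZMod.val_coe_unit_coprime b)
    · rw [hω.card_primitiveRoots, Finset.card_image_of_injOn (fun a ha b hb h => hinj a ha b hb h),
        Finset.card_univ, ZMod.card_units_eq_totient]
  rw [← himg, Finset.sum_image hinj]

lemma aux_units_fiberwise {n d : ℕ} [NeZero n] [NeZero d] (hd : d ∣ n) (f : (ZMod d)ˣ → ℂ) :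
    (d.totient : ℂ) * ∑ a : (ZMod n)ˣ, f (ZMod.unitsMap hd a) =
      (n.totient : ℂ) * ∑ b : (ZMod d)ˣ, f b := by
  classical
  set π := ZMod.unitsMap hd with hπ
  have hsurj : Function.Surjective π := ZMod.unitsMap_surjective hd
  set K := (Finset.univ.filter (fun a : (ZMod n)ˣ => π a = 1)).card with hK
  have hfib : ∀ b : (ZMod d)ˣ, (Finset.univ.filter (fun a : (ZMod n)ˣ => π a = b)).card = K := by
    intro b
    obtain ⟨a₀, ha₀⟩ := hsurj b
    apply Finset.card_bij' (fun a _ => a₀⁻¹ * a) (fun a _ => a₀ * a)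
    · intro a ha
      simp only [Finset.mem_filter, Finset.mem_univ, true_and] at ha ⊢
      rw [map_mul, map_inv, ha₀, ha, inv_mul_cancel]
    · intro a ha
      simp only [Finset.mem_filter, Finset.mem_univ, true_and] at ha ⊢
      rw [map_mul, ha₀, ha, mul_one]
    · intro a _; rw [mul_inv_cancel_left]
    · intro a _; rw [inv_mul_cancel_left]
  have hcards : n.totient = d.totient * K := by
    rw [← ZMod.card_units_eq_totient n, ← ZMod.card_units_eq_totient d, ← Finset.card_univ,
      ← Finset.card_univ, Finset.card_eq_sum_card_fiberwise
        (fun (a : (ZMod n)ˣ) _ => Finset.mem_univ (π a))]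
    rw [Finset.sum_congr rfl (fun b _ => hfib b), Finset.sum_const, smul_eq_mul, Finset.card_univ]
  have hsum : ∑ a : (ZMod n)ˣ, f (π a) = (K : ℂ) * ∑ b : (ZMod d)ˣ, f b := by
    rw [← Finset.sum_fiberwise' Finset.univ π f, Finset.mul_sum]
    refine Finset.sum_congr rfl fun b _ => ?_
    rw [Finset.sum_const, hfib b, nsmul_eq_mul]
  rw [hsum, hcards]
  push_cast
  ring

theorem stmt_10 (G : Type*) [CommGroup G] [Fintype G] [IsCyclic G]
    (n : ℕ) (hn : Fintype.card G = n) (g : G) :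
    ((Nat.totient n : ℂ) / n) *
      ∑ d ∈ n.divisors, ((ArithmeticFunction.moebius d : ℂ) / (Nat.totient d)) *
        (∑ᶠ χ : G →* ℂˣ, if orderOf χ = d then ((χ g : ℂˣ) : ℂ) else 0) =
    if Subgroup.zpowers g = ⊤ then 1 else 0 := by
  classical
  have hn0 : 0 < n := hn ▸ Fintype.card_pos
  haveI : NeZero n := ⟨hn0.ne'⟩
  haveI : NeZero ((Monoid.exponent G : ℂ)) := by
    refine ⟨?_⟩
    exact_mod_cast Monoid.exponent_ne_zero_of_finite
  obtain ⟨e⟩ := CommGroup.monoidHom_mulEquiv_of_hasEnoughRootsOfUnity G ℂ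
  haveI : Finite (G →* ℂˣ) := Finite.of_equiv G e.symm.toEquiv
  haveI : Fintype (G →* ℂˣ) := Fintype.ofFinite _
  have hcard : Fintype.card (G →* ℂˣ) = n := by rw [← hn]; exact Fintype.card_congr e.toEquiv
  -- every character has order dividing n
  have hord : ∀ χ : G →* ℂˣ, orderOf χ ∣ n := by
    intro χ
    apply orderOf_dvd_of_pow_eq_one
    ext x
    have hx : x ^ n = 1 := by rw [← hn]; exact pow_card_eq_one
    rw [MonoidHom.pow_apply, ← map_pow, hx, map_one, MonoidHom.one_apply]
  -- orthogonality
  have orth : ∀ x : G, ∑ χ : G →* ℂˣ, ((χ x : ℂˣ) : ℂ) = if x = 1 then (n : ℂ) else 0 := by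
    intro x
    split_ifs with hx
    · subst hx
      simp only [map_one, Units.val_one, Finset.sum_const, Finset.card_univ, hcard,
        nsmul_eq_mul, mul_one]
    · obtain ⟨φ, hφ⟩ := CommGroup.exists_apply_ne_one_of_hasEnoughRootsOfUnity G ℂ hx
      have hφ' : ((φ x : ℂˣ) : ℂ) ≠ 1 := fun h => hφ (Units.ext h)
      refine eq_zero_of_mul_eq_self_left hφ' ?_
      rw [Finset.mul_sum]
      simp only [← Units.val_mul, ← MonoidHom.mul_apply]
      exact Fintype.sum_bijective _ (Group.mulLeft_bijective φ) _ _ fun χ ↦ rfl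
  -- generator
  obtain ⟨z, hz⟩ := IsCyclic.exists_generator (α := G)
  have hordz : orderOf z = n := by
    rw [← hn, ← Nat.card_eq_fintype_card]; exact orderOf_eq_card_of_forall_mem_zpowers hz
  set Gen : Finset G := Finset.univ.filter (fun h : G => orderOf h = n) with hGen
  have hGencard : Gen.card = n.totient := by
    rw [hGen]
    exact IsCyclic.card_orderOf_eq_totient (hn ▸ dvd_rfl)
  have hφn0 : (n.totient : ℂ) ≠ 0 := by
    exact_mod_cast (Nat.totient_pos.mpr hn0).ne'
  -- parametrization of generators
  have hinjG : ∀ a ∈ (Finset.univ : Finset (ZMod n)ˣ), ∀ b ∈ (Finset.univ : Finset (ZMod n)ˣ),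
      z ^ ((a : ZMod n)).val = z ^ ((b : ZMod n)).val → a = b := by
    intro a _ b _ hab
    rw [pow_eq_pow_iff_modEq, hordz] at hab
    have : ((a : ZMod n)).val = ((b : ZMod n)).val := by
      have h1 := ZMod.val_lt (a : ZMod n)
      have h2 := ZMod.val_lt (b : ZMod n)
      unfold Nat.ModEq at hab
      rwa [Nat.mod_eq_of_lt h1, Nat.mod_eq_of_lt h2] at hab
    exact Units.ext (ZMod.val_injective n this)
  have himg : Gen = Finset.image (fun a : (ZMod n)ˣ => z ^ ((a : ZMod n)).val) Finset.univ := by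
    ext h
    simp only [hGen, Finset.mem_filter, Finset.mem_univ, true_and, Finset.mem_image]
    constructor
    · intro hh
      obtain ⟨k, hk⟩ := mem_powers_iff_mem_zpowers.mpr (hz h)
      have hk' : z ^ k = h := hk
      have hcop : Nat.Coprime k n := by
        have hpow : orderOf (z ^ k) = n := by rw [hk']; exact hh
        rw [orderOf_pow, hordz] at hpow
        have hg : n.gcd k ∣ n := Nat.gcd_dvd_left _ _
        have h3 : n * n.gcd k = n := by
          conv_rhs => rw [← Nat.div_mul_cancel hg, hpow]
        have h2 : n.gcd k = 1 :=
          Nat.eq_of_mul_eq_mul_left hn0 (by rw [h3, mul_one])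
        exact Nat.Coprime.symm h2
      refine ⟨ZMod.unitOfCoprime k hcop, ?_⟩
      rw [ZMod.coe_unitOfCoprime, ZMod.val_natCast, ← hordz, pow_mod_orderOf]
      exact hk'
    · rintro ⟨a, rfl⟩
      have hcop := ZMod.val_coe_unit_coprime a
      rw [orderOf_pow, hordz, Nat.Coprime.gcd_eq_one hcop.symm, Nat.div_one]
  -- character sum over generators
  have L2 : ∀ χ : G →* ℂˣ, (∑ h ∈ Gen, ((χ h : ℂˣ) : ℂ))
      = (n.totient : ℂ) * (ArithmeticFunction.moebius (orderOf χ) : ℂ)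
        / ((orderOf χ).totient : ℂ) := by
    intro χ
    set d := orderOf χ with hd
    have hdn : d ∣ n := hord χ
    have hd0 : 0 < d := by
      rcases Nat.eq_zero_or_pos d with h0 | h0
      · exfalso; rw [h0] at hdn; exact hn0.ne' (Nat.eq_zero_of_zero_dvd hdn)
      · exact h0
    haveI : NeZero d := ⟨hd0.ne'⟩
    set Ez : (G →* ℂˣ) →* ℂˣ :=
      { toFun := fun ψ => ψ z, map_one' := rfl, map_mul' := fun a b => rfl } with hEz
    have hinjE : Function.Injective Ez := by
      intro χ₁ χ₂ hE
      ext x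
      obtain ⟨k, hk⟩ := hz x
      rw [← hk, map_zpow, map_zpow]
      simp only [hEz, MonoidHom.coe_mk, OneHom.coe_mk] at hE
      rw [hE]
    have hozd : orderOf (χ z) = d := orderOf_injective Ez hinjE χ
    set ω : ℂ := ((χ z : ℂˣ) : ℂ) with hωdef
    have hω : IsPrimitiveRoot ω d := by
      have h1 := IsPrimitiveRoot.orderOf (χ z)
      rw [hozd] at h1
      exact IsPrimitiveRoot.coe_units_iff.mpr h1
    have hoω : orderOf ω = d := by rw [hωdef, orderOf_units, hozd]
    rw [himg, Finset.sum_image hinjG]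
    have hterm : ∀ a : (ZMod n)ˣ, ((χ (z ^ ((a : ZMod n)).val) : ℂˣ) : ℂ)
        = ω ^ ((ZMod.unitsMap hdn a : ZMod d)).val := by
      intro a
      have h1 : ((χ (z ^ ((a : ZMod n)).val) : ℂˣ) : ℂ) = ω ^ ((a : ZMod n)).val := by
        rw [map_pow, Units.val_pow_eq_pow_val]
      have hval : ((ZMod.unitsMap hdn a : ZMod d)).val = ((a : ZMod n)).val % d := by
        rw [ZMod.unitsMap_def]
        simp only [Units.coe_map, MonoidHom.coe_coe]
        rw [ZMod.castHom_apply, ← ZMod.natCast_val, ZMod.val_natCast]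
      rw [h1, hval, ← hoω, pow_mod_orderOf]
    rw [Finset.sum_congr rfl (fun a _ => hterm a)]
    have hfib := aux_units_fiberwise (n := n) (d := d) hdn
      (fun b => ω ^ ((b : ZMod d)).val)
    rw [aux_sum_units_pow hω] at hfib
    have hφd0 : ((d.totient : ℂ)) ≠ 0 := by
      exact_mod_cast (Nat.totient_pos.mpr hd0).ne'
    field_simp at hfib ⊢
    rw [mul_comm] at hfib
    linear_combination hfib
  -- generator criterion
  have hgeniff : (Subgroup.zpowers g = ⊤) ↔ orderOf g = n := by
    constructor
    · intro hh
      rw [← hn, ← Nat.card_eq_fintype_card]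
      exact orderOf_eq_card_of_forall_mem_zpowers (fun x => hh ▸ Subgroup.mem_top x)
    · intro hh
      apply Subgroup.eq_top_of_card_eq
      rw [Nat.card_zpowers, hh, Nat.card_eq_fintype_card, hn]
  have hφd0 : ∀ χ : G →* ℂˣ, (((orderOf χ).totient : ℂ)) ≠ 0 := by
    intro χ
    have hdn := hord χ
    have hd0 : 0 < orderOf χ := by
      rcases Nat.eq_zero_or_pos (orderOf χ) with h0 | h0
      · exfalso; rw [h0] at hdn; exact hn0.ne' (Nat.eq_zero_of_zero_dvd hdn)
      · exact h0
    exact_mod_cast (Nat.totient_pos.mpr hd0).ne'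
  -- rewrite finsum as finite sum
  have hfin : ∀ d : ℕ, (∑ᶠ χ : G →* ℂˣ, if orderOf χ = d then ((χ g : ℂˣ) : ℂ) else 0)
      = ∑ χ : G →* ℂˣ, (if orderOf χ = d then ((χ g : ℂˣ) : ℂ) else 0) :=
    fun d => finsum_eq_sum_of_fintype _
  simp only [hfin]
  -- regroup double sum into a single sum over characters
  have regroup : ∑ d ∈ n.divisors, ((ArithmeticFunction.moebius d : ℂ) / (Nat.totient d)) *
        ∑ χ : G →* ℂˣ, (if orderOf χ = d then ((χ g : ℂˣ) : ℂ) else 0)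
      = ∑ χ : G →* ℂˣ, ((ArithmeticFunction.moebius (orderOf χ) : ℂ) / ((orderOf χ).totient : ℂ))
          * ((χ g : ℂˣ) : ℂ) := by
    simp_rw [Finset.mul_sum]
    rw [Finset.sum_comm]
    refine Finset.sum_congr rfl fun χ _ => ?_
    have hmem : orderOf χ ∈ n.divisors := Nat.mem_divisors.mpr ⟨hord χ, hn0.ne'⟩
    calc ∑ d ∈ n.divisors, ((ArithmeticFunction.moebius d : ℂ) / (Nat.totient d)) *
            (if orderOf χ = d then ((χ g : ℂˣ) : ℂ) else 0)
        = ∑ d ∈ n.divisors, (if orderOf χ = d then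
            ((ArithmeticFunction.moebius (orderOf χ) : ℂ) / ((orderOf χ).totient : ℂ))
              * ((χ g : ℂˣ) : ℂ) else 0) := by
          refine Finset.sum_congr rfl fun d _ => ?_
          split_ifs with h
          · rw [h]
          · rw [mul_zero]
      _ = _ := by
          rw [Finset.sum_ite_eq n.divisors (orderOf χ), if_pos hmem]
  rw [regroup]
  -- sum over generators of inverses
  have inv_sum : ∀ χ : G →* ℂˣ, ∑ h ∈ Gen, ((χ h⁻¹ : ℂˣ) : ℂ) = ∑ h ∈ Gen, ((χ h : ℂˣ) : ℂ) := by
    intro χ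
    apply Finset.sum_equiv (Equiv.inv G)
    · intro h
      simp only [hGen, Finset.mem_filter, Finset.mem_univ, true_and, Equiv.inv_apply, orderOf_inv]
    · intro h _
      simp only [Equiv.inv_apply]
  have step2 : ∀ χ : G →* ℂˣ,
      ((ArithmeticFunction.moebius (orderOf χ) : ℂ) / ((orderOf χ).totient : ℂ)) * ((χ g : ℂˣ) : ℂ)
      = (1 / (n.totient : ℂ)) * ∑ h ∈ Gen, ((χ (h⁻¹ * g) : ℂˣ) : ℂ) := by
    intro χ
    have h1 : ∑ h ∈ Gen, ((χ (h⁻¹ * g) : ℂˣ) : ℂ)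
        = (∑ h ∈ Gen, ((χ h⁻¹ : ℂˣ) : ℂ)) * ((χ g : ℂˣ) : ℂ) := by
      rw [Finset.sum_mul]
      refine Finset.sum_congr rfl fun h _ => ?_
      rw [map_mul, Units.val_mul]
    rw [h1, inv_sum, L2]
    field_simp [hφd0 χ]
  rw [Finset.sum_congr rfl (fun χ _ => step2 χ), ← Finset.mul_sum, Finset.sum_comm]
  have horthsum : ∑ h ∈ Gen, ∑ χ : G →* ℂˣ, ((χ (h⁻¹ * g) : ℂˣ) : ℂ)
      = if orderOf g = n then (n : ℂ) else 0 := by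
    rw [Finset.sum_congr rfl (fun h _ => orth (h⁻¹ * g))]
    have hcond : ∀ h ∈ Gen, (if h⁻¹ * g = 1 then (n : ℂ) else 0)
        = if h = g then (n : ℂ) else 0 := by
      intro h _
      simp [inv_mul_eq_one]
    rw [Finset.sum_congr rfl hcond, Finset.sum_ite_eq' Gen g (fun _ => (n : ℂ))]
    simp only [hGen, Finset.mem_filter, Finset.mem_univ, true_and]
  rw [horthsum]
  have hnc0 : (n : ℂ) ≠ 0 := by exact_mod_cast hn0.ne'
  by_cases hg : orderOf g = n
  · rw [if_pos hg, if_pos (hgeniff.mpr hg)]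
    field_simp
  · rw [if_neg hg, if_neg (fun c => hg (hgeniff.mp c)), mul_zero, mul_zero]
end

section
/- For any real x ≥ 2, the number of primes p ≤ x whose multiplicative order modulo 2 satisfies ord_p(2) < √x / log x is at most ∑_{m < √x/log x} m = O(x / log²x). More precisely, ∏_{p ≤ x, ord_p(2) < √x/log x} p ≤ ∏_{m < √x/log x} (2^m - 1), so the number of such primes is less than ∑_{m < √x/log x} m. -/
-- v := √x / log x > 1 when x ≥ 2
lemma aux_log_lt_sqrt {x : ℝ} (hx : 2 ≤ x) : Real.log x < Real.sqrt x := by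
  set t := Real.sqrt (Real.sqrt x) with ht
  have hx0 : (0:ℝ) ≤ x := by linarith
  have hsx : (1:ℝ) < Real.sqrt x := by
    have := Real.lt_sqrt (x := 1) (y := x) (by norm_num)
    rw [this]; linarith
  have ht1 : (1:ℝ) < t := by
    have := Real.lt_sqrt (x := 1) (y := Real.sqrt x) (by norm_num)
    rw [ht, this]; linarith
  have ht2 : t ^ 2 = Real.sqrt x := Real.sq_sqrt (Real.sqrt_nonneg x)
  have hlog : Real.log x = 4 * Real.log t := by
    rw [ht, Real.log_sqrt (Real.sqrt_nonneg x), Real.log_sqrt hx0]; ring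
  have h1 : Real.log t < t - 1 := Real.log_lt_sub_one_of_pos (by linarith) (by linarith)
  nlinarith [sq_nonneg (t - 2)]

lemma aux_ord_pos {p : ℕ} (hp : p.Prime) (h2 : p ≠ 2) : 0 < orderOf (2 : ZMod p) := by
  haveI : Fact p.Prime := ⟨hp⟩
  have hco : Nat.Coprime 2 p := (Nat.coprime_primes Nat.prime_two hp).2 (fun h => h2 h.symm)
  set u := ZMod.unitOfCoprime 2 hco with hu
  have hcu : ((u : ZMod p)) = (2 : ZMod p) := by
    simp [hu, ZMod.coe_unitOfCoprime]
  rw [← hcu, orderOf_units]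
  exact orderOf_pos u

theorem stmt_15 (x : ℝ) (hx : 2 ≤ x)
    (T : Finset ℕ)
    (hT : T = (Finset.range (⌊x⌋₊ + 1)).filter
      (fun p => p.Prime ∧ p ≠ 2 ∧
        (orderOf ((2 : ZMod p)) : ℝ) < Real.sqrt x / Real.log x))
    (M : Finset ℕ)
    (hM : M = (Finset.Icc 1 ⌈Real.sqrt x / Real.log x⌉₊).filter
      (fun m : ℕ => (m : ℝ) < Real.sqrt x / Real.log x)) :
    (∏ p ∈ T, (p : ℝ)) ≤ (∏ m ∈ M, ((2 : ℝ) ^ m - 1)) ∧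
    T.card < ∑ m ∈ M, m := by
  set v := Real.sqrt x / Real.log x with hv
  have hlogpos : 0 < Real.log x := Real.log_pos (by linarith)
  have hv1 : (1:ℝ) < v := by
    rw [hv, lt_div_iff₀ hlogpos, one_mul]
    exact aux_log_lt_sqrt hx
  -- facts about members of T
  have hTmem : ∀ p ∈ T, p.Prime ∧ p ≠ 2 ∧ (orderOf ((2 : ZMod p)) : ℝ) < v := by
    intro p hp
    rw [hT, Finset.mem_filter] at hp
    exact hp.2
  -- the order lies in M
  have hordM : ∀ p ∈ T, orderOf (2 : ZMod p) ∈ M := by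
    intro p hp
    obtain ⟨hpp, hp2, hlt⟩ := hTmem p hp
    have hpos := aux_ord_pos hpp hp2
    rw [hM, Finset.mem_filter, Finset.mem_Icc]
    refine ⟨⟨hpos, ?_⟩, hlt⟩
    exact le_of_lt (Nat.lt_ceil.2 hlt)
  -- p divides 2^(ord p) - 1
  have hdvd : ∀ p ∈ T, p ∣ 2 ^ (orderOf (2 : ZMod p)) - 1 := by
    intro p hp
    obtain ⟨hpp, hp2, _⟩ := hTmem p hp
    haveI : Fact p.Prime := ⟨hpp⟩
    rw [← ZMod.natCast_eq_zero_iff]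
    have h1 : (1:ℕ) ≤ 2 ^ (orderOf (2 : ZMod p)) := Nat.one_le_two_pow
    push_cast [Nat.cast_sub h1]
    rw [pow_orderOf_eq_one (2 : ZMod p)]
    ring
  -- key divisibility in ℕ
  have hkey : (∏ p ∈ T, p) ∣ ∏ m ∈ M, (2 ^ m - 1) := by
    apply Finset.prod_primes_dvd
    · intro p hp
      exact (Nat.prime_iff).1 (hTmem p hp).1
    · intro p hp
      exact dvd_trans (hdvd p hp) (Finset.dvd_prod_of_mem _ (hordM p hp))
  have hMpos : ∀ m ∈ M, 0 < 2 ^ m - 1 := by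
    intro m hm
    rw [hM, Finset.mem_filter, Finset.mem_Icc] at hm
    have : 2 ^ 1 ≤ 2 ^ m := Nat.pow_le_pow_right (by norm_num) hm.1.1
    omega
  have hNpos : 0 < ∏ m ∈ M, (2 ^ m - 1) := Finset.prod_pos hMpos
  have hle : (∏ p ∈ T, p) ≤ ∏ m ∈ M, (2 ^ m - 1) := Nat.le_of_dvd hNpos hkey
  have h1M : 1 ∈ M := by
    rw [hM, Finset.mem_filter, Finset.mem_Icc]
    refine ⟨⟨le_refl 1, ?_⟩, by exact_mod_cast hv1⟩
    have : (1:ℕ) < ⌈v⌉₊ := Nat.lt_ceil.2 (by exact_mod_cast hv1)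
    omega
  constructor
  · calc (∏ p ∈ T, (p:ℝ)) = ((∏ p ∈ T, p : ℕ) : ℝ) := by push_cast; ring
      _ ≤ ((∏ m ∈ M, (2 ^ m - 1) : ℕ) : ℝ) := by exact_mod_cast hle
      _ = ∏ m ∈ M, ((2:ℝ) ^ m - 1) := by
          rw [Nat.cast_prod]
          apply Finset.prod_congr rfl
          intro m hm
          have := hMpos m hm
          push_cast [Nat.cast_sub (by omega : 1 ≤ 2 ^ m)]
          ring
  · have hstrict : (∏ m ∈ M, (2 ^ m - 1)) < ∏ m ∈ M, 2 ^ m := by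
      apply Finset.prod_lt_prod_of_nonempty hMpos
      · intro m hm; have := hMpos m hm; omega
      · exact ⟨1, h1M⟩
    have h2c : 2 ^ T.card ≤ ∏ p ∈ T, p := by
      apply Finset.pow_card_le_prod
      intro p hp
      exact (hTmem p hp).1.two_le
    have : 2 ^ T.card < 2 ^ (∑ m ∈ M, m) := by
      calc 2 ^ T.card ≤ ∏ p ∈ T, p := h2c
        _ ≤ ∏ m ∈ M, (2 ^ m - 1) := hle
        _ < ∏ m ∈ M, 2 ^ m := hstrict
        _ = 2 ^ (∑ m ∈ M, m) := by rw [← Finset.prod_pow_eq_pow_sum]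
    exact (Nat.pow_lt_pow_iff_right (by norm_num)).1 this
end
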